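/- arXiv:1708.06189 — 3 statements merged into one kernel-verified Lean document; each statement's English description precedes it below -/
import Mathlib

section
/- Under the Cramér condition φ(λ)=1 with φ', φ'' finite at λ, the product ∏_{j=1}^n φ(λ(n-j+1)/n) equals exp{-λIn}(1+O(1/n)) as n→∞, where I = ∫_0^1 ψ(u)du and ψ(u) = -(1/λ)log φ(λ(1-u)). In particular there is a constant C with ∏_{j=1}^n φ(λ(n-j+1)/n) ≤ C·exp{-λIn} for all n ≥ 1. -/
/-!
With `g u = log φ (λ u)`, the product is `exp` of the right-endpoint Riemann sum `∑ g (i / n)`,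
and the substitution `u ↦ 1 - u` gives `λ I = -∫₀¹ g`. Because `g 0 = g 1 = 0`, that Riemann sum
is exactly `n` times the trapezoidal approximation of `∫₀¹ g`, whose error is `O(1 / n²)` for the
`C²` function `g`. Hence the exponent differs from `-λ I n` by `O(1 / n)`, and
`|eˣ - 1| ≤ |x| e^|x|` turns this into both claims.
-/

open Set

theorem Real.abs_exp_sub_one_le_abs_mul_exp_abs (x : ℝ) :
    |Real.exp x - 1| ≤ |x| * Real.exp |x| := by
  have h_le : |Real.exp x - 1| ≤ Real.exp |x| - 1 := by
    rcases le_or_gt 0 x with hx | hx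
    · rw [abs_of_nonneg hx, abs_of_nonneg (by linarith [Real.add_one_le_exp x])]
    · rw [abs_of_neg hx, abs_of_neg (by linarith [Real.exp_lt_one_iff.mpr hx])]
      linarith [Real.add_one_le_exp x, Real.add_one_le_exp (-x)]
  have h_inv : Real.exp |x| * Real.exp (-|x|) = 1 := by
    rw [← Real.exp_add, add_neg_cancel, Real.exp_zero]
  nlinarith [Real.add_one_le_exp (-|x|), Real.exp_pos |x|]

theorem abs_le_of_abs_le_div_natCast {x C : ℝ} {n : ℕ} (hn : 0 < n) (hx : |x| ≤ C / n) :
    |x| ≤ C := by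
  have hC : 0 ≤ C / n := (abs_nonneg x).trans hx
  rw [le_div_iff₀ (by exact_mod_cast hn), zero_mul] at hC
  exact hx.trans (div_le_self hC (by exact_mod_cast hn))

theorem Real.abs_exp_sub_one_le_of_abs_le_div_natCast {x C : ℝ} {n : ℕ} (hn : 0 < n)
    (hx : |x| ≤ C / n) : |Real.exp x - 1| ≤ C * Real.exp C / n :=
  calc |Real.exp x - 1| ≤ |x| * Real.exp |x| := Real.abs_exp_sub_one_le_abs_mul_exp_abs x
    _ ≤ C / n * Real.exp C :=
        mul_le_mul hx (Real.exp_le_exp.mpr (abs_le_of_abs_le_div_natCast hn hx))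
          (Real.exp_pos _).le ((abs_nonneg x).trans hx)
    _ = C * Real.exp C / n := by ring

theorem exists_abs_iteratedDerivWithin_succ_le {f : ℝ → ℝ} {s : Set ℝ} {n : ℕ}
    (hs : IsCompact s) (hu : UniqueDiffOn ℝ s) (hf : ContDiffOn ℝ (n + 1) f s) :
    ∃ C, ∀ x, |iteratedDerivWithin (n + 1) f s x| ≤ C := by
  obtain ⟨C, hC⟩ :=
    hs.exists_bound_of_continuousOn (hf.continuousOn_iteratedDerivWithin le_rfl hu)
  refine ⟨max C 0, fun x => ?_⟩
  by_cases hx : x ∈ s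
  · exact (hC x hx).trans (le_max_left _ _)
  · -- off the closed set `s` the derivative within `s` takes the junk value `0`
    rw [iteratedDerivWithin_succ,
      derivWithin_zero_of_notMem_closure (by rwa [hs.isClosed.closure_eq]), abs_zero]
    exact le_max_right _ _

theorem natCast_mul_trapezoidal_integral_zero_one (f : ℝ → ℝ) {N : ℕ} (hN : 0 < N) :
    N * trapezoidal_integral f N 0 1 =
      ∑ i ∈ Finset.range N, f ((i + 1) / N) + (f 0 - f 1) / 2 := by
  obtain ⟨M, rfl⟩ := Nat.exists_eq_add_of_lt hN
  have hM : (M : ℝ) + 1 ≠ 0 := by positivity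
  simp only [trapezoidal_integral, zero_add, sub_zero, Nat.add_sub_cancel, Finset.sum_range_succ]
  push_cast
  rw [div_self hM]
  field_simp
  ring

theorem exists_abs_sum_sub_natCast_mul_integral_le {f : ℝ → ℝ}
    (hf : ContDiffOn ℝ 2 f (Icc 0 1)) (h01 : f 0 = f 1) :
    ∃ C, ∀ n : ℕ, 0 < n →
      |∑ i ∈ Finset.range n, f ((i + 1) / n) - n * ∫ x in (0:ℝ)..1, f x| ≤ C / n := by
  rw [← uIcc_of_le zero_le_one] at hf
  obtain ⟨ζ, hζ⟩ := exists_abs_iteratedDerivWithin_succ_le isCompact_uIcc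
    (uniqueDiffOn_uIcc zero_ne_one) hf
  refine ⟨ζ / 12, fun n hn => ?_⟩
  have h_err := trapezoidal_error_le_of_c2 hf hζ hn
  rw [trapezoidal_error, sub_zero, abs_one, one_pow, one_mul] at h_err
  have h_sum : ∑ i ∈ Finset.range n, f ((i + 1) / n) = n * trapezoidal_integral f n 0 1 := by
    rw [natCast_mul_trapezoidal_integral_zero_one f hn, h01, sub_self, zero_div, add_zero]
  calc |∑ i ∈ Finset.range n, f ((i + 1) / n) - n * ∫ x in (0:ℝ)..1, f x|
      = n * |trapezoidal_integral f n 0 1 - ∫ x in (0:ℝ)..1, f x| := by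
        rw [h_sum, ← mul_sub, abs_mul, Nat.abs_cast]
    _ ≤ n * (ζ / (12 * n ^ 2)) := by gcongr
    _ = ζ / 12 / n := by field_simp

theorem Finset.prod_Icc_one_natCast_sub_add_one {M : Type*} [CommMonoid M] (f : ℝ → M) (n : ℕ) :
    ∏ j ∈ Finset.Icc 1 n, f ((n : ℝ) - j + 1) = ∏ i ∈ Finset.range n, f (i + 1) := by
  rw [← Finset.Ico_add_one_right_eq_Icc, Finset.prod_Ico_eq_prod_range, Nat.add_sub_cancel,
    ← Finset.prod_range_reflect]
  refine Finset.prod_congr rfl fun i hi => congrArg f ?_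
  rw [Finset.mem_range] at hi
  rw [Nat.cast_add, Nat.cast_sub (by omega), Nat.cast_sub (by omega)]
  ring

section MGF

variable {lam : ℝ} {φ : ℝ → ℝ}

theorem mapsTo_mul_Icc_zero_one (hlam : 0 ≤ lam) : MapsTo (lam * ·) (Icc 0 1) (Icc 0 lam) :=
  fun _ hu => ⟨mul_nonneg hlam hu.1, mul_le_of_le_one_right hlam hu.2⟩

theorem contDiffOn_log_comp_mul {n : WithTop ℕ∞} (hlam : 0 ≤ lam)
    (hpos : ∀ t ∈ Icc 0 lam, 0 < φ t) (hφ : ContDiffOn ℝ n φ (Icc 0 lam)) :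
    ContDiffOn ℝ n (fun u => Real.log (φ (lam * u))) (Icc 0 1) :=
  (hφ.comp (contDiff_const.mul contDiff_id).contDiffOn (mapsTo_mul_Icc_zero_one hlam)).log
    fun _ hu => (hpos _ (mapsTo_mul_Icc_zero_one hlam hu)).ne'

theorem prod_Icc_eq_exp_sum_log (hlam : 0 ≤ lam) (hpos : ∀ t ∈ Icc 0 lam, 0 < φ t) (n : ℕ) :
    ∏ j ∈ Finset.Icc 1 n, φ (lam * ((n : ℝ) - j + 1) / n) =
      Real.exp (∑ i ∈ Finset.range n, Real.log (φ (lam * ((i + 1) / n)))) := by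
  rw [Finset.prod_Icc_one_natCast_sub_add_one (fun x => φ (lam * x / n)), Real.exp_sum]
  refine Finset.prod_congr rfl fun i hi => ?_
  have hi : (i + 1 : ℝ) / n ≤ 1 := by
    have : i < n := Finset.mem_range.mp hi
    rw [div_le_one (Nat.cast_pos.mpr (by omega))]
    exact_mod_cast this
  rw [mul_div_assoc, Real.exp_log (hpos _ (mapsTo_mul_Icc_zero_one hlam ⟨by positivity, hi⟩))]

end MGF

theorem product_mgf_asymptotics (lam : ℝ) (hlam : 0 < lam) (φ : ℝ → ℝ)
    (hpos : ∀ t ∈ Icc (0:ℝ) lam, 0 < φ t)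
    (hsmooth : ContDiffOn ℝ 2 φ (Icc 0 lam))
    (hcramer : φ lam = 1) (hφ0 : φ 0 = 1)
    (ψ : ℝ → ℝ) (hψ : ∀ u, ψ u = -(1 / lam) * Real.log (φ (lam * (1 - u))))
    (I : ℝ) (hI : I = ∫ u in (0:ℝ)..1, ψ u) :
    (∃ C : ℝ, ∀ n : ℕ, 1 ≤ n →
      |(∏ j ∈ Finset.Icc 1 n, φ (lam * ((n : ℝ) - j + 1) / n)) * Real.exp (lam * I * n) - 1|
        ≤ C / n)
    ∧ ∃ C : ℝ, ∀ n : ℕ, 1 ≤ n →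
      (∏ j ∈ Finset.Icc 1 n, φ (lam * ((n : ℝ) - j + 1) / n)) ≤ C * Real.exp (-(lam * I * n)) := by
  obtain ⟨C, hC⟩ := exists_abs_sum_sub_natCast_mul_integral_le
    (contDiffOn_log_comp_mul hlam.le hpos hsmooth) (by simp [hφ0, hcramer])
  have h_I : lam * I = -∫ u in (0:ℝ)..1, Real.log (φ (lam * u)) := by
    rw [hI, funext hψ, intervalIntegral.integral_const_mul,
      intervalIntegral.integral_comp_sub_left (fun u => Real.log (φ (lam * u)))]
    field_simp
    norm_num
  set D : ℕ → ℝ := fun n => ∑ i ∈ Finset.range n, Real.log (φ (lam * ((i + 1) / n))) -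
    n * ∫ u in (0:ℝ)..1, Real.log (φ (lam * u))
  have h_split (n : ℕ) : ∏ j ∈ Finset.Icc 1 n, φ (lam * ((n : ℝ) - j + 1) / n) =
      Real.exp (D n) * Real.exp (-(lam * I * n)) := by
    rw [prod_Icc_eq_exp_sum_log hlam.le hpos, ← Real.exp_add, h_I]
    congr 1
    ring
  refine ⟨⟨C * Real.exp C, fun n hn => ?_⟩, ⟨Real.exp C, fun n hn => ?_⟩⟩
  · rw [h_split, mul_assoc, ← Real.exp_add, neg_add_cancel, Real.exp_zero, mul_one]
    exact Real.abs_exp_sub_one_le_of_abs_le_div_natCast hn (hC n hn)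
  · rw [h_split]
    gcongr
    exact (le_abs_self _).trans (abs_le_of_abs_le_div_natCast hn (hC n hn))
end

section
/- Let λ, I > 0. There exists a constant C such that for all x ≥ 1, ∑_{n=1}^∞ exp{-λx/n - λIn} ≤ C·x^{1/4}·exp{-2λ√(Ix)}. -/
/-!
Write `x = I t²` and `m = n + 1`. Then `λx/m + λIm = 2λ√(Ix) + λI (m - t)²/m`, so the series is
`exp(-2λ√(Ix))` times `∑ₘ exp(-λI (m - t)²/m)`. Since `(m - t)²/m` is at least
`min ((m - t)²/(2t), |m - t|/2)`, each term is dominated by a Gaussian of width `√t` centred at `t`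
plus an exponential in `|m - t|`. Summed over `m`, these contribute `O(√t) = O(x^{1/4})`.
-/

open Real Finset

theorem sum_range_comp_abs_sub_le_two_mul_tsum {h : ℝ → ℝ} (h_nonneg : ∀ u, 0 ≤ h u)
    (h_anti : AntitoneOn h (Set.Ici 0)) (h_sum : Summable fun k : ℕ => h k) (t : ℝ) (M : ℕ) :
    ∑ n ∈ range M, h |n - t| ≤ 2 * ∑' k : ℕ, h k := by
  -- Below `N = ⌈t⌉₊` the terms are dominated by the reflected `h (N - 1 - n)`, from `N` on by the
  -- shifted `h (n - N)`; each family sums to at most `∑' k, h k`.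
  set N := ⌈t⌉₊
  have h_below : ∑ n ∈ range N, h |n - t| ≤ ∑' k : ℕ, h k := calc
    ∑ n ∈ range N, h |n - t| ≤ ∑ n ∈ range N, h (N - 1 - n : ℕ) := by
      refine sum_le_sum fun n hn => h_anti (Set.mem_Ici.mpr (Nat.cast_nonneg _))
        (Set.mem_Ici.mpr (abs_nonneg _)) ?_
      have hnN : n < N := mem_range.mp hn
      have hNt : ((N - 1 : ℕ) : ℝ) < t := Nat.lt_ceil.mp (by omega)
      rw [Nat.cast_sub (by omega : n ≤ N - 1)]
      linarith [le_abs_self (t - n), abs_sub_comm (n : ℝ) t]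
    _ = ∑ k ∈ range N, h k := sum_range_reflect (fun k : ℕ => h k) N
    _ ≤ ∑' k : ℕ, h k := h_sum.sum_le_tsum _ fun k _ => h_nonneg k
  have h_above : ∑ k ∈ range M, h |(N + k : ℕ) - t| ≤ ∑' k : ℕ, h k := calc
    ∑ k ∈ range M, h |(N + k : ℕ) - t| ≤ ∑ k ∈ range M, h k := by
      refine sum_le_sum fun k _ => h_anti (Set.mem_Ici.mpr (Nat.cast_nonneg _))
        (Set.mem_Ici.mpr (abs_nonneg _)) ?_
      push_cast
      linarith [le_abs_self ((N : ℝ) + k - t), Nat.le_ceil t]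
    _ ≤ ∑' k : ℕ, h k := h_sum.sum_le_tsum _ fun k _ => h_nonneg k
  calc ∑ n ∈ range M, h |n - t| ≤ ∑ n ∈ range (N + M), h |n - t| :=
        sum_le_sum_of_subset_of_nonneg (range_mono (by omega)) fun _ _ _ => h_nonneg _
    _ ≤ 2 * ∑' k : ℕ, h k := by rw [sum_range_add]; linarith

theorem summable_exp_neg_mul_natCast {b : ℝ} (hb : 0 < b) :
    Summable fun k : ℕ => exp (-(b * k)) := by
  refine (summable_exp_nat_mul_iff.mpr (neg_lt_zero.mpr hb)).congr fun k => ?_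
  rw [mul_neg, mul_comm]

theorem tsum_exp_neg_mul_natCast_le {b : ℝ} (hb : 0 < b) :
    ∑' k : ℕ, exp (-(b * k)) ≤ 1 + 1 / b := by
  have hr : exp (-b) < 1 := exp_lt_one_iff.mpr (neg_lt_zero.mpr hb)
  calc ∑' k : ℕ, exp (-(b * k)) = ∑' k : ℕ, exp (-b) ^ k :=
        tsum_congr fun k => by rw [← exp_nat_mul, mul_neg, mul_comm]
    _ = (1 - exp (-b))⁻¹ := tsum_geometric_of_lt_one (exp_nonneg _) hr
    _ ≤ 1 + 1 / b := by
      have h_exp : (b + 1) * exp (-b) ≤ 1 := by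
        rw [exp_neg, ← div_eq_mul_inv, div_le_one (exp_pos b)]
        linarith [add_one_le_exp b]
      rw [inv_le_iff_one_le_mul₀ (sub_pos.mpr hr), one_add_div hb.ne', div_mul_eq_mul_div,
        le_div_iff₀ hb]
      linarith

theorem exp_neg_mul_sq_le {a : ℝ} (ha : 0 ≤ a) (u : ℝ) :
    exp (-(a * u ^ 2)) ≤ exp (1 / 4) * exp (-(√a * u)) := by
  rw [← exp_add, exp_le_exp]
  nlinarith [sq_nonneg (√a * u - 1 / 2), sq_sqrt ha]

theorem summable_exp_neg_mul_sq {a : ℝ} (ha : 0 < a) :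
    Summable fun k : ℕ => exp (-(a * (k : ℝ) ^ 2)) :=
  ((summable_exp_neg_mul_natCast (sqrt_pos.mpr ha)).mul_left _).of_nonneg_of_le
    (fun _ => (exp_pos _).le) fun k => exp_neg_mul_sq_le ha.le k

theorem tsum_exp_neg_mul_sq_le {a : ℝ} (ha : 0 < a) :
    ∑' k : ℕ, exp (-(a * (k : ℝ) ^ 2)) ≤ exp (1 / 4) * (1 + 1 / √a) := by
  have h_geom := summable_exp_neg_mul_natCast (sqrt_pos.mpr ha)
  calc ∑' k : ℕ, exp (-(a * (k : ℝ) ^ 2)) ≤ ∑' k : ℕ, exp (1 / 4) * exp (-(√a * k)) :=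
        (summable_exp_neg_mul_sq ha).tsum_le_tsum (fun k => exp_neg_mul_sq_le ha.le k)
          (h_geom.mul_left _)
    _ ≤ exp (1 / 4) * (1 + 1 / √a) := by
      rw [tsum_mul_left]
      gcongr
      exact tsum_exp_neg_mul_natCast_le (sqrt_pos.mpr ha)

theorem antitoneOn_exp_neg_mul_sq_add_exp_neg_mul {a b : ℝ} (ha : 0 ≤ a) (hb : 0 ≤ b) :
    AntitoneOn (fun u => exp (-(a * u ^ 2)) + exp (-(b * u))) (Set.Ici 0) := by
  rintro u (hu : 0 ≤ u) v - huv
  dsimp only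
  gcongr

theorem min_le_sub_sq_div {m t : ℝ} (hm : 0 < m) (ht : 0 < t) :
    min (|m - t| ^ 2 / (2 * t)) (|m - t| / 2) ≤ (m - t) ^ 2 / m := by
  rw [sq_abs]
  rcases le_or_gt m (2 * t) with h | h
  · exact min_le_of_left_le (div_le_div_of_nonneg_left (sq_nonneg _) hm h)
  · refine min_le_of_right_le ?_
    rw [abs_of_pos (by linarith), div_le_div_iff₀ two_pos hm]
    nlinarith

theorem exp_neg_mul_le_add_of_min_le {c p q r : ℝ} (hc : 0 ≤ c) (h : min p q ≤ r) :
    exp (-(c * r)) ≤ exp (-(c * p)) + exp (-(c * q)) := by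
  rcases min_le_iff.mp h with h | h
  · exact le_add_of_le_of_nonneg (by gcongr) (exp_pos _).le
  · exact le_add_of_nonneg_of_le (exp_pos _).le (by gcongr)

theorem exp_neg_mul_sq_div_add_le {c m t : ℝ} (hc : 0 ≤ c) (hm : 0 < m) (ht : 0 < t) :
    exp (-(c * (t ^ 2 / m + m))) ≤
      exp (-(2 * c * t)) * (exp (-(c / (2 * t) * |m - t| ^ 2)) + exp (-(c / 2 * |m - t|))) := by
  have h_split : c * (t ^ 2 / m + m) = 2 * c * t + c * ((m - t) ^ 2 / m) := by field_simp; ring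
  rw [h_split, neg_add, exp_add]
  refine mul_le_mul_of_nonneg_left ?_ (exp_pos _).le
  refine (exp_neg_mul_le_add_of_min_le hc (min_le_sub_sq_div hm ht)).trans_eq ?_
  ring_nf

theorem tsum_exp_neg_mul_sq_div_add_le {c t : ℝ} (hc : 0 < c) (ht : 0 < t) :
    ∑' n : ℕ, exp (-(c * (t ^ 2 / (n + 1) + (n + 1)))) ≤
      2 * (exp (1 / 4) * (1 + √(2 * t / c)) + (1 + 2 / c)) * exp (-(2 * c * t)) := by
  set a := c / (2 * t)
  set b := c / 2
  have ha : 0 < a := by positivity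
  have hb : 0 < b := by positivity
  set h : ℝ → ℝ := fun u => exp (-(a * u ^ 2)) + exp (-(b * u))
  have h_tsum : ∑' k : ℕ, h k ≤ exp (1 / 4) * (1 + √(2 * t / c)) + (1 + 2 / c) := by
    rw [Summable.tsum_add (summable_exp_neg_mul_sq ha) (summable_exp_neg_mul_natCast hb)]
    have h_sqrt : 1 / √a = √(2 * t / c) := by rw [one_div, ← sqrt_inv, inv_div]
    have h_inv : 1 / b = 2 / c := one_div_div c 2
    grw [tsum_exp_neg_mul_sq_le ha, tsum_exp_neg_mul_natCast_le hb, h_sqrt, h_inv]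
  refine tsum_le_of_sum_range_le (fun _ => (exp_pos _).le) fun M => ?_
  calc ∑ n ∈ range M, exp (-(c * (t ^ 2 / (n + 1) + (n + 1))))
      ≤ ∑ n ∈ range M, exp (-(2 * c * t)) * h |n - (t - 1)| := by
        refine sum_le_sum fun n _ => ?_
        rw [sub_sub_eq_add_sub]
        exact exp_neg_mul_sq_div_add_le hc.le (by positivity) ht
    _ = exp (-(2 * c * t)) * ∑ n ∈ range M, h |n - (t - 1)| := (mul_sum ..).symm
    _ ≤ exp (-(2 * c * t)) * (2 * ∑' k : ℕ, h k) := by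
        gcongr
        exact sum_range_comp_abs_sub_le_two_mul_tsum (fun _ => by positivity)
          (antitoneOn_exp_neg_mul_sq_add_exp_neg_mul ha.le hb.le)
          ((summable_exp_neg_mul_sq ha).add (summable_exp_neg_mul_natCast hb)) (t - 1) M
    _ ≤ _ := by rw [mul_comm]; gcongr

theorem series_estimate (lam I : ℝ) (hlam : 0 < lam) (hI : 0 < I) :
    ∃ C : ℝ, ∀ x : ℝ, 1 ≤ x →
      (∑' n : ℕ, Real.exp (-(lam * x / (n + 1)) - lam * I * (n + 1)))
        ≤ C * x ^ ((1 : ℝ) / 4) * Real.exp (-(2 * lam * Real.sqrt (I * x))) := by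
  have hc : 0 < lam * I := mul_pos hlam hI
  set A := 2 * (exp (1 / 4) + 1 + 2 / (lam * I)) with hA
  set B := 2 * exp (1 / 4) * √(2 / (lam * I)) / I ^ ((1 : ℝ) / 4) with hB
  refine ⟨A + B, fun x hx => ?_⟩
  set t := √(x / I) with ht_def
  have ht : 0 < t := sqrt_pos.mpr (by positivity)
  have hx_eq : x = I * t ^ 2 := by rw [sq_sqrt (by positivity)]; field_simp
  have h_sqrt_Ix : √(I * x) = I * t := by
    rw [hx_eq, show I * (I * t ^ 2) = (I * t) ^ 2 by ring, sqrt_sq (by positivity)]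
  have h_sqrt_t : √t = x ^ ((1 : ℝ) / 4) / I ^ ((1 : ℝ) / 4) := by
    rw [sqrt_eq_rpow, ht_def, sqrt_eq_rpow, ← rpow_mul (by positivity),
      div_rpow (by positivity) hI.le]
    norm_num
  have h_one_le : 1 ≤ x ^ ((1 : ℝ) / 4) := one_le_rpow hx (by norm_num)
  calc ∑' n : ℕ, exp (-(lam * x / (n + 1)) - lam * I * (n + 1))
      = ∑' n : ℕ, exp (-(lam * I * (t ^ 2 / (n + 1) + (n + 1)))) :=
        tsum_congr fun n => by rw [hx_eq]; ring_nf
    _ ≤ 2 * (exp (1 / 4) * (1 + √(2 * t / (lam * I))) + (1 + 2 / (lam * I))) *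
          exp (-(2 * (lam * I) * t)) :=
        tsum_exp_neg_mul_sq_div_add_le hc ht
    _ = (A + B * x ^ ((1 : ℝ) / 4)) * exp (-(2 * lam * √(I * x))) := by
        rw [h_sqrt_Ix, mul_div_right_comm, sqrt_mul' _ ht.le, h_sqrt_t, hA, hB]
        ring_nf
    _ ≤ (A + B) * x ^ ((1 : ℝ) / 4) * exp (-(2 * lam * √(I * x))) := by
        have hA_nonneg : 0 ≤ A := by positivity
        gcongr
        nlinarith
end

section
/- Let f_t and f̂_{1-t} be the two-dimensional centered Gaussian densities with covariance matrices Σ_t = [[∫_0^t σ²(u)du, ∫_0^t σ²(u)(t-u)du],[∫_0^t σ²(u)(t-u)du, ∫_0^t σ²(u)(t-u)²du]] and Σ̂_{1-t} = [[∫_t^1 σ²(u)du, ∫_t^1 σ²(u)(u-t)du],[∫_t^1 σ²(u)(u-t)du, ∫_t^1 σ²(u)(u-t)²du]]. Then for every z ∈ ℝ and every t ∈ (0,1), ∫_{ℝ²} f_t(u,v)·f̂_{1-t}(u, z-v) du dv = f_1(0,z), where f_1 is the Gaussian density with covariance Σ_1. -/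
/-!
Write a centered Gaussian density on `ℝ²` with covariance `!![a, b; b, c]` as the marginal
density `N(0, a)` of the first coordinate times the conditional density
`N((b / a) x, (a c - b²) / a)` of the second. Integrating out one variable at a time, with the
one-dimensional identity `N(0, a)(x) · N(0, b)(w - γ x) = N(0, γ² a + b)(w) · (a Gaussian in x)`,
gives `f_A ⋆ f_B = f_{A + B}`. Both covariance matrices are Gram matrices of the weight `t - u`
against `σ²(u) du`, on `[0, t]` and `[t, 1]` (reflecting the first coordinate flips the sign of
`u - t`), so `A + B` is the Gram matrix on `[0, 1]`. Replacing the weight by `1 - u` changes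
neither the `(0, 0)` entry nor the determinant, and these are all the density at `(0, z)` sees.
-/

open Set

/-- Centered two-dimensional Gaussian density with covariance matrix `M`. -/
noncomputable def gauss2 (M : Matrix (Fin 2) (Fin 2) ℝ) (x y : ℝ) : ℝ :=
  (1 / (2 * Real.pi * Real.sqrt M.det)) *
    Real.exp (-(1 / 2) * dotProduct ![x, y] (Matrix.mulVec M⁻¹ ![x, y]))

/-- Covariance matrix of `(ξ(t), ∫₀ᵗ ξ)`. -/
noncomputable def covMat (σ2 : ℝ → ℝ) (t : ℝ) : Matrix (Fin 2) (Fin 2) ℝ :=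
  !![∫ u in (0:ℝ)..t, σ2 u, ∫ u in (0:ℝ)..t, σ2 u * (t - u);
     ∫ u in (0:ℝ)..t, σ2 u * (t - u), ∫ u in (0:ℝ)..t, σ2 u * (t - u) ^ 2]

/-- Covariance matrix for the time-reversed process. -/
noncomputable def covMatHat (σ2 : ℝ → ℝ) (t : ℝ) : Matrix (Fin 2) (Fin 2) ℝ :=
  !![∫ u in t..(1:ℝ), σ2 u, ∫ u in t..(1:ℝ), σ2 u * (u - t);
     ∫ u in t..(1:ℝ), σ2 u * (u - t), ∫ u in t..(1:ℝ), σ2 u * (u - t) ^ 2]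

open Real MeasureTheory ProbabilityTheory
open scoped Matrix

-- `gaussianPDFReal 0`, with a real variance parameter to keep the variance algebra in `ℝ`.
noncomputable def gaussPDF (v x : ℝ) : ℝ := (√(2 * π * v))⁻¹ * exp (-x ^ 2 / (2 * v))

lemma gaussPDF_eq_gaussianPDFReal {v : ℝ} (hv : 0 ≤ v) :
    gaussPDF v = gaussianPDFReal 0 v.toNNReal := by
  ext x
  simp [gaussPDF, gaussianPDFReal, Real.coe_toNNReal _ hv]

lemma gaussPDF_nonneg (v x : ℝ) : 0 ≤ gaussPDF v x := by
  unfold gaussPDF; positivity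

@[fun_prop]
lemma continuous_gaussPDF (v : ℝ) : Continuous (gaussPDF v) := by
  unfold gaussPDF; fun_prop

lemma integrable_gaussPDF {v : ℝ} (hv : 0 ≤ v) : Integrable (gaussPDF v) := by
  rw [gaussPDF_eq_gaussianPDFReal hv]
  exact integrable_gaussianPDFReal 0 _

lemma integral_gaussPDF {v : ℝ} (hv : 0 < v) : ∫ x, gaussPDF v x = 1 := by
  rw [gaussPDF_eq_gaussianPDFReal hv.le]
  exact integral_gaussianPDFReal_eq_one 0 (by simpa using hv)

lemma mul_exp_mul_mul_exp (p q r s : ℝ) : p * exp q * (r * exp s) = p * r * exp (q + s) := by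
  rw [exp_add]; ring

lemma gaussPDF_mul_gaussPDF {a b : ℝ} (ha : 0 < a) (hb : 0 < b) (γ w x : ℝ) :
    gaussPDF a x * gaussPDF b (w - γ * x) =
      gaussPDF (γ ^ 2 * a + b) w *
        gaussPDF (a * b / (γ ^ 2 * a + b)) (x - γ * a * w / (γ ^ 2 * a + b)) := by
  have hs : 0 < γ ^ 2 * a + b := by positivity
  simp only [gaussPDF]
  rw [mul_exp_mul_mul_exp, mul_exp_mul_mul_exp, ← mul_inv, ← mul_inv, ← sqrt_mul (by positivity),
    ← sqrt_mul (by positivity)]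
  congr 1
  · congr 2
    field_simp
  · congr 1
    field_simp
    ring

lemma integral_gaussPDF_sub_mul_gaussPDF {a b : ℝ} (ha : 0 < a) (hb : 0 < b) (γ m w : ℝ) :
    ∫ x, gaussPDF a (x - m) * gaussPDF b (w - γ * x) = gaussPDF (γ ^ 2 * a + b) (w - γ * m) := by
  have hs : 0 < γ ^ 2 * a + b := by positivity
  calc ∫ x, gaussPDF a (x - m) * gaussPDF b (w - γ * x)
      = ∫ x, gaussPDF a x * gaussPDF b ((w - γ * m) - γ * x) := by
        rw [← integral_add_right_eq_self _ m]
        congr 1 with x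
        rw [add_sub_cancel_right]
        ring_nf
    _ = ∫ x, gaussPDF (γ ^ 2 * a + b) (w - γ * m) * gaussPDF (a * b / (γ ^ 2 * a + b))
          (x - γ * a * (w - γ * m) / (γ ^ 2 * a + b)) := by
        simp only [gaussPDF_mul_gaussPDF ha hb]
    _ = gaussPDF (γ ^ 2 * a + b) (w - γ * m) := by
        rw [integral_const_mul, integral_sub_right_eq_self, integral_gaussPDF (by positivity),
          mul_one]

lemma Matrix.IsHermitian.exists_eq_fin_two {M : Matrix (Fin 2) (Fin 2) ℝ} (hM : M.IsHermitian) :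
    ∃ a b c, M = !![a, b; b, c] := by
  have h10 : M 1 0 = M 0 1 := by simpa using (hM.apply 1 0).symm
  exact ⟨M 0 0, M 0 1, M 1 1, (Matrix.eta_fin_two M).trans (by rw [h10])⟩

lemma gauss2_nonneg (M : Matrix (Fin 2) (Fin 2) ℝ) (x y : ℝ) : 0 ≤ gauss2 M x y := by
  unfold gauss2; positivity

lemma gauss2_le {M : Matrix (Fin 2) (Fin 2) ℝ} (hM : M.PosSemidef) (x y : ℝ) :
    gauss2 M x y ≤ 1 / (2 * π * √M.det) := by
  have hq : 0 ≤ dotProduct ![x, y] (M⁻¹.mulVec ![x, y]) := by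
    simpa using hM.inv.dotProduct_mulVec_nonneg ![x, y]
  unfold gauss2
  refine mul_le_of_le_one_right (by positivity) (exp_le_one_iff.2 ?_)
  nlinarith

lemma continuous_gauss2 (M : Matrix (Fin 2) (Fin 2) ℝ) :
    Continuous fun p : ℝ × ℝ => gauss2 M p.1 p.2 := by
  unfold gauss2
  simp only [dotProduct, Matrix.mulVec, Fin.sum_univ_two]
  fun_prop

lemma gauss2_eq_gaussPDF_mul_gaussPDF {a b c : ℝ} (ha : 0 < a) (hdet : 0 < a * c - b ^ 2)
    (x y : ℝ) :
    gauss2 !![a, b; b, c] x y = gaussPDF a x * gaussPDF ((a * c - b ^ 2) / a) (y - b / a * x) := by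
  have hsqrt : √(2 * π * a) * √(2 * π * ((a * c - b ^ 2) / a)) = 2 * π * √(a * c - b * b) := by
    rw [← sqrt_mul (by positivity), show 2 * π * a * (2 * π * ((a * c - b ^ 2) / a)) =
      (2 * π) ^ 2 * (a * c - b * b) by field_simp, sqrt_mul (by positivity),
      sqrt_sq (by positivity)]
  rw [gauss2, Matrix.inv_def, Matrix.adjugate_fin_two_of, Matrix.det_fin_two_of,
    Ring.inverse_eq_inv', gaussPDF, gaussPDF, mul_exp_mul_mul_exp, ← mul_inv, hsqrt, one_div]
  congr 2
  simp [dotProduct, Matrix.mulVec, Fin.sum_univ_two]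
  field_simp
  ring

lemma gauss2_neg_fst (a b c x y : ℝ) :
    gauss2 !![a, b; b, c] (-x) y = gauss2 !![a, -b; -b, c] x y := by
  have hdet : !![a, -b; -b, c].det = !![a, b; b, c].det := by simp [Matrix.det_fin_two_of]
  rw [gauss2, gauss2, hdet]
  congr 3
  simp [Matrix.inv_def, hdet, Matrix.adjugate_fin_two_of, dotProduct, Matrix.mulVec]
  ring

-- At `(0, y)` the quadratic form is `M 0 0 * y ^ 2 / M.det`.
lemma gauss2_zero_congr {M N : Matrix (Fin 2) (Fin 2) ℝ} (hdet : M.det = N.det)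
    (h₀₀ : M 0 0 = N 0 0) (y : ℝ) : gauss2 M 0 y = gauss2 N 0 y := by
  simp [gauss2, Matrix.inv_def, Matrix.adjugate_fin_two, dotProduct, Matrix.mulVec,
    Fin.sum_univ_two, h₀₀, hdet]

lemma integrable_gaussPDF_mul_gaussPDF_sub {a d : ℝ} (ha : 0 ≤ a) (hd : 0 < d) (β : ℝ) :
    Integrable fun p : ℝ × ℝ => gaussPDF a p.1 * gaussPDF d (p.2 - β * p.1) := by
  rw [Measure.volume_eq_prod, integrable_prod_iff (by fun_prop)]
  refine ⟨ae_of_all _ fun u => ((integrable_gaussPDF hd.le).comp_sub_right (β * u)).const_mul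
    (gaussPDF a u), ?_⟩
  simp only [norm_mul, Real.norm_of_nonneg (gaussPDF_nonneg _ _), integral_const_mul,
    integral_sub_right_eq_self, integral_gaussPDF hd, mul_one]
  exact integrable_gaussPDF ha

lemma Matrix.PosDef.exists_eq_fin_two {M : Matrix (Fin 2) (Fin 2) ℝ} (hM : M.PosDef) :
    ∃ a b c, M = !![a, b; b, c] ∧ 0 < a ∧ 0 < a * c - b ^ 2 := by
  obtain ⟨a, b, c, rfl⟩ := hM.1.exists_eq_fin_two
  refine ⟨a, b, c, rfl, by simpa using hM.diag_pos (i := 0), ?_⟩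
  simpa [Matrix.det_fin_two_of, sq] using hM.det_pos

lemma integrable_gauss2 {M : Matrix (Fin 2) (Fin 2) ℝ} (hM : M.PosDef) :
    Integrable fun p : ℝ × ℝ => gauss2 M p.1 p.2 := by
  obtain ⟨a, b, c, rfl, ha, hdet⟩ := hM.exists_eq_fin_two
  simp only [gauss2_eq_gaussPDF_mul_gaussPDF ha hdet]
  exact integrable_gaussPDF_mul_gaussPDF_sub ha.le (by positivity) _

lemma integrable_gauss2_mul_gauss2_sub {M N : Matrix (Fin 2) (Fin 2) ℝ} (hM : M.PosDef)
    (hN : N.PosSemidef) (x y : ℝ) :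
    Integrable fun p : ℝ × ℝ => gauss2 M p.1 p.2 * gauss2 N (x - p.1) (y - p.2) :=
  (integrable_gauss2 hM).mul_bdd
    ((continuous_gauss2 N).comp (by fun_prop : Continuous fun p : ℝ × ℝ => (x - p.1, y - p.2))
      ).aestronglyMeasurable
    (ae_of_all _ fun p => by
      rw [Real.norm_of_nonneg (gauss2_nonneg _ _ _)]
      exact gauss2_le hN _ _)

lemma integral_gauss2_mul_gauss2_sub_snd {a₁ b₁ c₁ a₂ b₂ c₂ : ℝ}
    (ha₁ : 0 < a₁) (h₁ : 0 < a₁ * c₁ - b₁ ^ 2) (ha₂ : 0 < a₂) (h₂ : 0 < a₂ * c₂ - b₂ ^ 2)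
    (x y u : ℝ) :
    ∫ v, gauss2 !![a₁, b₁; b₁, c₁] u v * gauss2 !![a₂, b₂; b₂, c₂] (x - u) (y - v) =
      gaussPDF a₁ u * gaussPDF a₂ (x - u) *
        gaussPDF ((a₁ * c₁ - b₁ ^ 2) / a₁ + (a₂ * c₂ - b₂ ^ 2) / a₂)
          (y - b₂ / a₂ * (x - u) - b₁ / a₁ * u) := by
  have h := integral_gaussPDF_sub_mul_gaussPDF (div_pos h₁ ha₁) (div_pos h₂ ha₂) 1
    (b₁ / a₁ * u) (y - b₂ / a₂ * (x - u))
  simp only [one_pow, one_mul] at h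
  simp only [gauss2_eq_gaussPDF_mul_gaussPDF ha₁ h₁, gauss2_eq_gaussPDF_mul_gaussPDF ha₂ h₂]
  rw [← h, ← integral_const_mul]
  congr 1 with v
  ring_nf

theorem integral_gauss2_mul_gauss2_sub {M N : Matrix (Fin 2) (Fin 2) ℝ} (hM : M.PosDef)
    (hN : N.PosDef) (x y : ℝ) :
    ∫ p : ℝ × ℝ, gauss2 M p.1 p.2 * gauss2 N (x - p.1) (y - p.2) = gauss2 (M + N) x y := by
  have hint := integrable_gauss2_mul_gauss2_sub hM hN.posSemidef x y
  obtain ⟨a₁, b₁, c₁, rfl, ha₁, h₁⟩ := hM.exists_eq_fin_two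
  obtain ⟨a₂, b₂, c₂, rfl, ha₂, h₂⟩ := hN.exists_eq_fin_two
  set d := (a₁ * c₁ - b₁ ^ 2) / a₁ + (a₂ * c₂ - b₂ ^ 2) / a₂
  set γ := b₁ / a₁ - b₂ / a₂
  have hd : 0 < d := by positivity
  have hsum : 0 < (a₁ + a₂) * (c₁ + c₂) - (b₁ + b₂) ^ 2 := by
    simpa [Matrix.det_fin_two, sq] using (hM.add hN).det_pos
  calc ∫ p : ℝ × ℝ,
        gauss2 !![a₁, b₁; b₁, c₁] p.1 p.2 * gauss2 !![a₂, b₂; b₂, c₂] (x - p.1) (y - p.2)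
      = ∫ u, gaussPDF a₁ u * gaussPDF a₂ (x - u) *
          gaussPDF d (y - b₂ / a₂ * (x - u) - b₁ / a₁ * u) := by
        rw [Measure.volume_eq_prod] at hint ⊢
        rw [integral_prod _ hint]
        simp only [integral_gauss2_mul_gauss2_sub_snd ha₁ h₁ ha₂ h₂]
        rfl
    _ = ∫ u, gaussPDF (a₁ + a₂) x * (gaussPDF (a₁ * a₂ / (a₁ + a₂)) (u - a₁ * x / (a₁ + a₂)) *
          gaussPDF d ((y - b₂ / a₂ * x) - γ * u)) := by
        congr 1 with u
        have h := gaussPDF_mul_gaussPDF ha₁ ha₂ 1 x u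
        simp only [one_pow, one_mul] at h
        rw [h, ← mul_assoc]
        congr 2
        simp only [γ]
        ring
    _ = gaussPDF (a₁ + a₂) x * gaussPDF (γ ^ 2 * (a₁ * a₂ / (a₁ + a₂)) + d)
          ((y - b₂ / a₂ * x) - γ * (a₁ * x / (a₁ + a₂))) := by
        rw [integral_const_mul, integral_gaussPDF_sub_mul_gaussPDF (by positivity) hd]
    _ = gauss2 (!![a₁, b₁; b₁, c₁] + !![a₂, b₂; b₂, c₂]) x y := by
        simp only [Matrix.of_add_of, Matrix.cons_add_cons, Matrix.empty_add_empty]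
        rw [gauss2_eq_gaussPDF_mul_gaussPDF (by positivity) hsum]
        congr 2
        · simp only [d, γ]
          field_simp
          ring
        · simp only [γ]
          field_simp
          ring

-- The Gram matrix of `1, w` in `L²([a, b], σ u du)`.
noncomputable def momentMatrix (σ w : ℝ → ℝ) (a b : ℝ) : Matrix (Fin 2) (Fin 2) ℝ :=
  !![∫ u in a..b, σ u, ∫ u in a..b, σ u * w u;
     ∫ u in a..b, σ u * w u, ∫ u in a..b, σ u * w u ^ 2]

section Moments

variable {σ w : ℝ → ℝ} {a b : ℝ}

lemma intervalIntegrable_mul_of_continuous (hσ : ContinuousOn σ (uIcc a b)) {g : ℝ → ℝ}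
    (hg : Continuous g) : IntervalIntegrable (fun u => σ u * g u) volume a b :=
  (hσ.mul hg.continuousOn).intervalIntegrable

lemma integral_mul_add_mul (hσ : ContinuousOn σ (uIcc a b)) (hw : Continuous w) (α β : ℝ) :
    ∫ u in a..b, σ u * (α + β * w u) =
      α * (∫ u in a..b, σ u) + β * ∫ u in a..b, σ u * w u := by
  have h₀ : IntervalIntegrable σ volume a b := hσ.intervalIntegrable
  have h₁ := intervalIntegrable_mul_of_continuous hσ hw
  rw [← intervalIntegral.integral_const_mul, ← intervalIntegral.integral_const_mul,
    ← intervalIntegral.integral_add (h₀.const_mul α) (h₁.const_mul β)]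
  congr 1 with u
  ring

lemma integral_mul_add_mul_sq (hσ : ContinuousOn σ (uIcc a b)) (hw : Continuous w) (α β : ℝ) :
    ∫ u in a..b, σ u * (α + β * w u) ^ 2 =
      α ^ 2 * (∫ u in a..b, σ u) + 2 * α * β * (∫ u in a..b, σ u * w u) +
        β ^ 2 * ∫ u in a..b, σ u * w u ^ 2 := by
  have h₀ : IntervalIntegrable σ volume a b := hσ.intervalIntegrable
  have h₁ := intervalIntegrable_mul_of_continuous hσ hw
  have h₂ := intervalIntegrable_mul_of_continuous hσ (g := fun u => w u ^ 2) (hw.pow 2)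
  rw [← intervalIntegral.integral_const_mul, ← intervalIntegral.integral_const_mul,
    ← intervalIntegral.integral_const_mul,
    ← intervalIntegral.integral_add (h₀.const_mul _) (h₁.const_mul _),
    ← intervalIntegral.integral_add ((h₀.const_mul _).add (h₁.const_mul _)) (h₂.const_mul _)]
  congr 1 with u
  ring

lemma det_momentMatrix_const_add (hσ : ContinuousOn σ (uIcc a b)) (hw : Continuous w) (c : ℝ) :
    (momentMatrix σ (fun u => c + w u) a b).det = (momentMatrix σ w a b).det := by
  have h₁ := integral_mul_add_mul hσ hw c 1
  have h₂ := integral_mul_add_mul_sq hσ hw c 1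
  simp only [one_mul] at h₁ h₂
  simp only [momentMatrix, Matrix.det_fin_two_of, h₁, h₂]
  ring

lemma gauss2_zero_momentMatrix_const_add (hσ : ContinuousOn σ (uIcc a b)) (hw : Continuous w)
    (c y : ℝ) :
    gauss2 (momentMatrix σ (fun u => c + w u) a b) 0 y = gauss2 (momentMatrix σ w a b) 0 y :=
  gauss2_zero_congr (det_momentMatrix_const_add hσ hw c) rfl y

lemma gauss2_momentMatrix_neg (x y : ℝ) :
    gauss2 (momentMatrix σ (fun u => -w u) a b) x y = gauss2 (momentMatrix σ w a b) (-x) y := by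
  simp only [momentMatrix, gauss2_neg_fst, mul_neg, neg_sq, intervalIntegral.integral_neg]

lemma momentMatrix_add_adjacent {c : ℝ} (hab : ContinuousOn σ (uIcc a b))
    (hbc : ContinuousOn σ (uIcc b c)) (hw : Continuous w) :
    momentMatrix σ w a b + momentMatrix σ w b c = momentMatrix σ w a c := by
  simp only [momentMatrix, Matrix.of_add_of, Matrix.cons_add_cons, Matrix.empty_add_empty,
    intervalIntegral.integral_add_adjacent_intervals hab.intervalIntegrable hbc.intervalIntegrable,
    intervalIntegral.integral_add_adjacent_intervals (intervalIntegrable_mul_of_continuous hab hw)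
      (intervalIntegrable_mul_of_continuous hbc hw),
    intervalIntegral.integral_add_adjacent_intervals
      (intervalIntegrable_mul_of_continuous hab (g := fun u => w u ^ 2) (hw.pow 2))
      (intervalIntegrable_mul_of_continuous hbc (g := fun u => w u ^ 2) (hw.pow 2))]

lemma momentMatrix_posDef (hab : a < b) (hσ : ContinuousOn σ (Icc a b))
    (hσpos : ∀ u ∈ Icc a b, 0 < σ u) (hw : Continuous w) (hinj : Function.Injective w) :
    (momentMatrix σ w a b).PosDef := by
  rw [Matrix.posDef_iff_dotProduct_mulVec]
  refine ⟨?_, fun x hx => ?_⟩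
  · ext i j
    fin_cases i <;> fin_cases j <;> rfl
  have hσ' : ContinuousOn σ (uIcc a b) := by rwa [uIcc_of_le hab.le]
  have hquad :
      star x ⬝ᵥ (momentMatrix σ w a b *ᵥ x) = ∫ u in a..b, σ u * (x 0 + x 1 * w u) ^ 2 := by
    rw [integral_mul_add_mul_sq hσ' hw]
    simp [momentMatrix, dotProduct, Matrix.mulVec, Fin.sum_univ_two]
    ring
  rw [hquad]
  have hend : x 0 + x 1 * w a ≠ 0 ∨ x 0 + x 1 * w b ≠ 0 := by
    by_contra! h
    have h₁ : x 1 = 0 := by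
      have hne : w a - w b ≠ 0 := sub_ne_zero.2 (hinj.ne hab.ne)
      have : x 1 * (w a - w b) = 0 := by linear_combination h.1 - h.2
      simpa [hne] using this
    apply hx
    ext i
    fin_cases i <;> simp_all
  refine intervalIntegral.integral_pos hab (by fun_prop) (fun u hu => ?_) ?_
  · exact mul_nonneg (hσpos u (Ioc_subset_Icc_self hu)).le (sq_nonneg _)
  rcases hend with h | h
  · exact ⟨a, left_mem_Icc.2 hab.le, mul_pos (hσpos a (left_mem_Icc.2 hab.le)) (by positivity)⟩
  · exact ⟨b, right_mem_Icc.2 hab.le, mul_pos (hσpos b (right_mem_Icc.2 hab.le)) (by positivity)⟩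

end Moments

theorem gaussian_convolution_identity (σ2 : ℝ → ℝ)
    (hcont : ContinuousOn σ2 (Icc 0 1)) (hpos : ∀ u ∈ Icc (0:ℝ) 1, 0 < σ2 u)
    (t : ℝ) (ht : t ∈ Ioo (0:ℝ) 1) (z : ℝ) :
    ∫ p : ℝ × ℝ, gauss2 (covMat σ2 t) p.1 p.2 * gauss2 (covMatHat σ2 t) p.1 (z - p.2)
      = gauss2 (covMat σ2 1) 0 z := by
  obtain ⟨ht₀, ht₁⟩ := ht
  have hσ₀ : ContinuousOn σ2 (Icc 0 t) := hcont.mono (Icc_subset_Icc le_rfl ht₁.le)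
  have hσ₁ : ContinuousOn σ2 (Icc t 1) := hcont.mono (Icc_subset_Icc ht₀.le le_rfl)
  have hw : Continuous fun u : ℝ => t - u := by fun_prop
  have hA := momentMatrix_posDef ht₀ hσ₀ (fun u hu => hpos u ⟨hu.1, hu.2.trans ht₁.le⟩) hw
    (sub_right_injective (G := ℝ))
  have hB := momentMatrix_posDef ht₁ hσ₁ (fun u hu => hpos u ⟨ht₀.le.trans hu.1, hu.2⟩) hw
    (sub_right_injective (G := ℝ))
  have hHat (x y : ℝ) :
      gauss2 (covMatHat σ2 t) x y = gauss2 (momentMatrix σ2 (fun u => t - u) t 1) (0 - x) y := by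
    rw [show (fun u : ℝ => t - u) = fun u => -(u - t) from funext fun u => (neg_sub u t).symm,
      gauss2_momentMatrix_neg, zero_sub, neg_neg]
    rfl
  calc ∫ p : ℝ × ℝ, gauss2 (covMat σ2 t) p.1 p.2 * gauss2 (covMatHat σ2 t) p.1 (z - p.2)
      = gauss2 (momentMatrix σ2 (t - ·) 0 t + momentMatrix σ2 (t - ·) t 1) 0 z := by
        simp only [hHat]
        exact integral_gauss2_mul_gauss2_sub hA hB 0 z
    _ = gauss2 (momentMatrix σ2 (fun u => (1 - t) + (t - u)) 0 1) 0 z := by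
        rw [momentMatrix_add_adjacent (by rwa [uIcc_of_le ht₀.le]) (by rwa [uIcc_of_le ht₁.le])
          hw, gauss2_zero_momentMatrix_const_add (by rwa [uIcc_of_le zero_le_one]) hw]
    _ = gauss2 (covMat σ2 1) 0 z := by
        rw [show (fun u : ℝ => (1 - t) + (t - u)) = fun u => 1 - u from funext fun u => by ring]
        rfl
end
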